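/- arXiv:1804.10818 — 6 statements merged into one kernel-verified Lean document; each statement's English description precedes it below -/
import Mathlib

section
/- Let G be an undirected graph on N vertices, S a set of l pinned vertices, and for each unpinned vertex p_j (j = 1,...,N−l) let w_{p_j} be the number of vertices in S adjacent to p_j. Then the smallest eigenvalue of the grounded Laplacian satisfies λ_1(L(S|S)) ≤ (w_{p_1} + w_{p_2} + ... + w_{p_{N−l}})/(N−l). -/
open Matrix

/-- The smallest eigenvalue of a matrix, via its real spectrum. -/
noncomputable def minEig {n : Type*} [Fintype n] [DecidableEq n]
    (M : Matrix n n ℝ) : ℝ := sInf (spectrum ℝ M)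

/-- The grounded Laplacian: the principal submatrix obtained by deleting the rows and
columns indexed by `S`. -/
def grounded {N : ℕ} (L : Matrix (Fin N) (Fin N) ℝ) (S : Finset (Fin N)) :
    Matrix {v : Fin N // v ∉ S} {v : Fin N // v ∉ S} ℝ :=
  L.submatrix (fun p => p.1) (fun p => p.1)

/-!
Testing the Rayleigh quotient of the grounded Laplacian `L(S|S)` at the all-ones vector `𝟙`:
since `L 𝟙 = 0`, the row of `L(S|S)` indexed by `v ∉ S` sums to minus the entries of `L` in the
columns of `S`, i.e. to the number of neighbours of `v` in `S`. Hence `𝟙ᵀ L(S|S) 𝟙 = ∑ w_v`,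
while `𝟙ᵀ 𝟙 = N - l`.
-/

namespace Matrix

variable {n : Type*} [Fintype n] [DecidableEq n]

lemma minEig_le_of_mem_spectrum {M : Matrix n n ℝ} {x : ℝ} (hx : x ∈ spectrum ℝ M) :
    minEig M ≤ x :=
  csInf_le M.finite_spectrum.bddBelow hx

lemma minEig_of_isEmpty [IsEmpty n] (M : Matrix n n ℝ) : minEig M = 0 := by
  rw [minEig, spectrum.of_subsingleton, Real.sInf_empty]

lemma IsHermitian.posSemidef_sub_minEig {A : Matrix n n ℝ} (hA : A.IsHermitian) :
    (A - algebraMap ℝ _ (minEig A)).PosSemidef := by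
  refine posSemidef_iff_isHermitian_and_spectrum_nonneg.mpr
    ⟨hA.sub (isHermitian_diagonal _), fun x hx => ?_⟩
  rw [← spectrum.sub_singleton_eq, Set.mem_sub] at hx
  obtain ⟨y, hy, _, rfl, rfl⟩ := hx
  exact sub_nonneg.mpr (minEig_le_of_mem_spectrum hy)

lemma IsHermitian.minEig_mul_dotProduct_self_le {A : Matrix n n ℝ} (hA : A.IsHermitian)
    (x : n → ℝ) : minEig A * (x ⬝ᵥ x) ≤ x ⬝ᵥ A *ᵥ x := by
  have := hA.posSemidef_sub_minEig.dotProduct_mulVec_nonneg x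
  simp only [star_trivial, sub_mulVec, dotProduct_sub, Algebra.algebraMap_eq_smul_one,
    smul_mulVec, one_mulVec, dotProduct_smul, smul_eq_mul] at this
  linarith

-- For empty `n` both sides are `0`, since `sInf ∅ = 0` and `x / 0 = 0`.
lemma IsHermitian.minEig_le_sum_div_card {A : Matrix n n ℝ} (hA : A.IsHermitian) :
    minEig A ≤ (∑ i, ∑ j, A i j) / Fintype.card n := by
  cases isEmpty_or_nonempty n
  · simp [minEig_of_isEmpty]
  rw [le_div_iff₀ (by exact_mod_cast Fintype.card_pos)]
  simpa [dotProduct, mulVec] using hA.minEig_mul_dotProduct_self_le (fun _ => 1)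

end Matrix

namespace SimpleGraph

section

variable {V : Type*} [Fintype V] [DecidableEq V] (G : SimpleGraph V) [DecidableRel G.Adj]
  {R : Type*} [Ring R]

lemma lapMatrix_apply_of_ne {u v : V} (h : u ≠ v) :
    G.lapMatrix R u v = -(if G.Adj u v then 1 else 0) := by
  simp [lapMatrix, degMatrix, adjMatrix_apply, h]

lemma sum_compl_lapMatrix_apply {S : Finset V} {v : V} (hv : v ∉ S) :
    ∑ u ∈ Sᶜ, G.lapMatrix R v u = (S.filter (G.Adj v)).card := by
  have hrow : ∑ u, G.lapMatrix R v u = 0 := by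
    simpa [mulVec, dotProduct] using congrFun (G.lapMatrix_mulVec_const_eq_zero (R := R)) v
  have hS : ∑ u ∈ S, G.lapMatrix R v u = -(S.filter (G.Adj v)).card := by
    rw [Finset.sum_congr rfl fun u hu =>
      G.lapMatrix_apply_of_ne (ne_of_mem_of_not_mem hu hv).symm]
    simp [Finset.sum_boole]
  rwa [← Finset.sum_compl_add_sum S, hS, add_neg_eq_zero] at hrow

end

lemma sum_sum_grounded_lapMatrix {N : ℕ} (G : SimpleGraph (Fin N)) [DecidableRel G.Adj]
    (S : Finset (Fin N)) :
    ∑ p, ∑ q, grounded (G.lapMatrix ℝ) S p q =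
      ∑ v ∈ Sᶜ, ((S.filter (fun s => G.Adj v s)).card : ℝ) := by
  have hcompl : ∀ v, v ∈ Sᶜ ↔ v ∉ S := fun _ => Finset.mem_compl
  rw [Finset.sum_subtype _ hcompl]
  refine Fintype.sum_congr _ _ fun p => ?_
  rw [← G.sum_compl_lapMatrix_apply p.2, Finset.sum_subtype _ hcompl]
  rfl

end SimpleGraph

theorem stmt7_general {N : ℕ} (G : SimpleGraph (Fin N)) [DecidableRel G.Adj]
    (S : Finset (Fin N)) :
    minEig (grounded (G.lapMatrix ℝ) S) ≤
      (∑ v ∈ Sᶜ, ((S.filter (fun s => G.Adj v s)).card : ℝ)) / (Sᶜ.card : ℝ) := by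
  have hA : (grounded (G.lapMatrix ℝ) S).IsHermitian := (G.isHermitian_lapMatrix ℝ).submatrix _
  rw [← G.sum_sum_grounded_lapMatrix S, ← Fintype.card_of_subtype Sᶜ fun _ => Finset.mem_compl]
  exact hA.minEig_le_sum_div_card

theorem stmt7 {N : ℕ} (G : SimpleGraph (Fin N)) [DecidableRel G.Adj]
    (S : Finset (Fin N)) (hS : S ≠ Finset.univ) :
    minEig (grounded (G.lapMatrix ℝ) S) ≤
      (∑ v ∈ Sᶜ, ((S.filter (fun s => G.Adj v s)).card : ℝ)) / (Sᶜ.card : ℝ) :=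
  stmt7_general G S
end

section
/- Let G be an undirected graph on N vertices with Laplacian L, and let i be a single pinned vertex of degree k_i. Then λ_1(L(i|i)) ≤ k_i/(N−1) ≤ 1. -/
open Matrix

/-!
A Hermitian matrix dominates its smallest eigenvalue times the identity, so the Rayleigh
quotient of any vector bounds `minEig` from above. For the grounded Laplacian `L(i|i)` take the
all-ones vector on the `N - 1` remaining vertices: since the rows and columns of `L` sum to zero,
the sum of the entries of `L(i|i)` is `L i i = deg i`. Finally `deg i ≤ N - 1`.
-/

open Finset

open scoped MatrixOrder in
theorem minEig_mul_dotProduct_self_le {n : Type*} [Fintype n] [DecidableEq n]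
    {M : Matrix n n ℝ} (hM : M.IsHermitian) (x : n → ℝ) :
    minEig M * (x ⬝ᵥ x) ≤ x ⬝ᵥ (M *ᵥ x) := by
  have hle : algebraMap ℝ (Matrix n n ℝ) (minEig M) ≤ M :=
    (algebraMap_le_iff_le_spectrum hM.isSelfAdjoint).mpr fun _ hμ =>
      csInf_le (finite_spectrum M).bddBelow hμ
  have := (le_iff.mp hle).dotProduct_mulVec_nonneg x
  rwa [Algebra.algebraMap_eq_smul_one, sub_mulVec, dotProduct_sub, smul_mulVec, one_mulVec,
    dotProduct_smul, smul_eq_mul, sub_nonneg] at this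

theorem minEig_mul_card_le_sum {n : Type*} [Fintype n] [DecidableEq n]
    {M : Matrix n n ℝ} (hM : M.IsHermitian) :
    minEig M * Fintype.card n ≤ ∑ i, ∑ j, M i j := by
  simpa [dotProduct, mulVec] using minEig_mul_dotProduct_self_le hM 1

theorem Fintype.sum_subtype_notMem_singleton {α M : Type*} [Fintype α] [DecidableEq α]
    [AddCommGroup M] (f : α → M) (i : α) :
    ∑ v : {v // v ∉ ({i} : Finset α)}, f v = ∑ v, f v - f i := by
  rw [← sum_subtype (univ.erase i) (by simp) f, sum_erase_eq_sub (mem_univ i)]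

namespace SimpleGraph

variable {V : Type*} [Fintype V] [DecidableEq V] (G : SimpleGraph V) [DecidableRel G.Adj]

theorem lapMatrix_row_sum_eq_zero (u : V) : ∑ w, G.lapMatrix ℝ u w = 0 := by
  simpa [mulVec, dotProduct] using congrFun (G.lapMatrix_mulVec_const_eq_zero (R := ℝ)) u

theorem lapMatrix_col_sum_eq_zero (w : V) : ∑ u, G.lapMatrix ℝ u w = 0 := by
  simpa only [(G.isSymm_lapMatrix (R := ℝ)).apply w] using G.lapMatrix_row_sum_eq_zero w

theorem lapMatrix_apply_self (v : V) : G.lapMatrix ℝ v v = G.degree v := by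
  simp [lapMatrix, degMatrix]

theorem sum_sum_lapMatrix_compl_singleton (i : V) :
    ∑ u : {v // v ∉ ({i} : Finset V)}, ∑ w : {v // v ∉ ({i} : Finset V)},
      G.lapMatrix ℝ u w = G.degree i := by
  simp only [Fintype.sum_subtype_notMem_singleton (G.lapMatrix ℝ _), lapMatrix_row_sum_eq_zero,
    zero_sub, Fintype.sum_subtype_notMem_singleton (fun u => -G.lapMatrix ℝ u i),
    sum_neg_distrib, lapMatrix_col_sum_eq_zero, lapMatrix_apply_self]
  ring

end SimpleGraph

theorem stmt9 {N : ℕ} (hN : 2 ≤ N) (G : SimpleGraph (Fin N)) [DecidableRel G.Adj]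
    (i : Fin N) :
    minEig (grounded (G.lapMatrix ℝ) {i}) ≤ (G.degree i : ℝ) / ((N : ℝ) - 1) ∧
      (G.degree i : ℝ) / ((N : ℝ) - 1) ≤ 1 := by
  have hN1 : (0 : ℝ) < N - 1 := sub_pos.mpr (by exact_mod_cast hN)
  have hdeg : (G.degree i : ℝ) ≤ N - 1 := by
    rw [le_sub_iff_add_le]
    exact_mod_cast Fintype.card_fin N ▸ G.degree_lt_card_verts i
  have hcard : (Fintype.card {v : Fin N // v ∉ ({i} : Finset (Fin N))} : ℝ) = N - 1 := by
    simp [Nat.cast_sub (by omega : 1 ≤ N)]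
  have hrayleigh := minEig_mul_card_le_sum
    ((G.isHermitian_lapMatrix (R := ℝ)).submatrix (Subtype.val : {v // v ∉ ({i} : Finset _)} → _))
  rw [hcard] at hrayleigh
  refine ⟨(le_div_iff₀ hN1).mpr ?_, (div_le_one hN1).mpr hdeg⟩
  simpa [grounded, G.sum_sum_lapMatrix_compl_singleton] using hrayleigh
end

section
/- Let G be an undirected graph on N vertices with Laplacian L, and let i be a vertex. Then λ_1(L(i|i)) = 1 if and only if vertex i is adjacent to all other N−1 vertices. -/
/-!
Deleting row and column `i` of the Laplacian leaves the Laplacian `L(H)` of the induced subgraph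
`H` on the remaining vertices plus, on the diagonal, the indicator of adjacency to `i`. If `i` is
universal this is `L(H) + I` with `L(H)` positive semidefinite, so `λ₁ ≥ 1`. Conversely, the Rayleigh quotient at the
all-ones vector gives `λ₁ · (N - 1) ≤ deg i`, hence `λ₁ = 1` forces `deg i = N - 1`, and also
`λ₁ ≤ 1` when `i` is universal.
-/

open Matrix

open Finset

namespace Matrix.IsHermitian

variable {n : Type*} [Fintype n] [DecidableEq n] [Nonempty n] {A : Matrix n n ℝ}

theorem le_sInf_spectrum_iff (hA : A.IsHermitian) {c : ℝ} :
    c ≤ sInf (spectrum ℝ A) ↔ (A - algebraMap ℝ (Matrix n n ℝ) c).PosSemidef := by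
  have hne : (spectrum ℝ A).Nonempty := by
    rw [hA.spectrum_real_eq_range_eigenvalues]
    exact Set.range_nonempty _
  have hc : (algebraMap ℝ (Matrix n n ℝ) c).IsHermitian := by simp [algebraMap_eq_diagonal]
  rw [le_csInf_iff A.finite_real_spectrum.bddBelow hne,
    posSemidef_iff_isHermitian_and_spectrum_nonneg, ← spectrum.sub_singleton_eq,
    Set.sub_singleton, Set.image_subset_iff]
  simp only [Set.subset_def, Set.mem_preimage, Set.mem_ofPred_eq, sub_nonneg]
  exact ⟨fun h => ⟨hA.sub hc, h⟩, And.right⟩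

theorem sInf_spectrum_mul_dotProduct_le (hA : A.IsHermitian) (x : n → ℝ) :
    sInf (spectrum ℝ A) * (x ⬝ᵥ x) ≤ x ⬝ᵥ (A *ᵥ x) := by
  have := (hA.le_sInf_spectrum_iff.mp le_rfl).dotProduct_mulVec_nonneg x
  rw [star_trivial, sub_mulVec, dotProduct_sub, Algebra.algebraMap_eq_smul_one, smul_mulVec,
    one_mulVec, dotProduct_smul, smul_eq_mul] at this
  linarith

end Matrix.IsHermitian

instance Finset.nonempty_notMem_singleton {V : Type*} [Nontrivial V] (i : V) :
    Nonempty {v // v ∉ ({i} : Finset V)} :=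
  let ⟨v, hv⟩ := exists_ne i
  ⟨⟨v, by simpa using hv⟩⟩

namespace SimpleGraph

section General

variable {V : Type*} [Fintype V] [DecidableEq V] (G : SimpleGraph V) [DecidableRel G.Adj]

theorem lapMatrix_mulVec_one (R : Type*) [NonAssocRing R] : G.lapMatrix R *ᵥ 1 = 0 :=
  G.lapMatrix_mulVec_const_eq_zero

/- `G.comap Subtype.val` is the subgraph induced on the complement of `S`; unlike `G.induce`, its
vertex type is literally `{v // v ∉ S}`, the index type of the grounded matrix. -/
theorem degree_eq_degree_comap_compl_add (S : Finset V) (p : {v // v ∉ S}) :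
    G.degree p =
      (G.comap (Subtype.val : {v // v ∉ S} → V)).degree p + #{u ∈ S | G.Adj p u} := by
  have hH : ((G.comap Subtype.val).neighborFinset p).map (.subtype (· ∉ S)) =
      {u ∈ G.neighborFinset p | u ∉ S} := by
    ext u; simp
  rw [← card_neighborFinset_eq_degree, ← card_neighborFinset_eq_degree,
    ← card_map (.subtype _), hH,
    ← card_filter_add_card_filter_not (s := G.neighborFinset p) (· ∉ S), add_right_inj]
  congr 1
  ext u
  simp [and_comm]

theorem lapMatrix_submatrix_compl (R : Type*) [AddGroupWithOne R] (S : Finset V) :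
    (G.lapMatrix R).submatrix (Subtype.val : {v // v ∉ S} → V) Subtype.val =
      (G.comap Subtype.val).lapMatrix R +
        diagonal fun p : {v // v ∉ S} => (#{u ∈ S | G.Adj p u} : R) := by
  ext p q
  by_cases h : p = q
  · subst h
    simp [lapMatrix, degMatrix, G.degree_eq_degree_comap_compl_add S p]
  · simp [lapMatrix, degMatrix, h, Subtype.val_injective.ne h]

end General

section Grounded

variable {N : ℕ} (G : SimpleGraph (Fin N)) [DecidableRel G.Adj] (i : Fin N)

theorem isHermitian_grounded_lapMatrix (S : Finset (Fin N)) :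
    (grounded (G.lapMatrix ℝ) S).IsHermitian :=
  (G.posSemidef_lapMatrix ℝ).isHermitian.submatrix _

theorem grounded_lapMatrix_singleton :
    grounded (G.lapMatrix ℝ) {i} =
      (G.comap Subtype.val).lapMatrix ℝ +
        diagonal fun p : {v // v ∉ ({i} : Finset (Fin N))} => if G.Adj p i then 1 else 0 := by
  rw [grounded, G.lapMatrix_submatrix_compl ℝ {i}]
  congr
  ext p
  simp [filter_singleton, apply_ite]

theorem one_dotProduct_grounded_lapMatrix_mulVec_one :
    1 ⬝ᵥ (grounded (G.lapMatrix ℝ) {i} *ᵥ 1) = G.degree i := by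
  rw [grounded_lapMatrix_singleton, add_mulVec, lapMatrix_mulVec_one, zero_add, one_dotProduct,
    degree_eq_sum_if_adj, ← Fintype.sum_subtype_add_sum_subtype (· ∈ ({i} : Finset (Fin N)))]
  simp [mulVec_diagonal, G.adj_comm i]

variable [Nontrivial (Fin N)]

theorem minEig_grounded_lapMatrix_mul_le_degree :
    minEig (grounded (G.lapMatrix ℝ) {i}) * (N - 1 : ℕ) ≤ G.degree i := by
  have := (G.isHermitian_grounded_lapMatrix {i}).sInf_spectrum_mul_dotProduct_le 1
  rw [one_dotProduct_grounded_lapMatrix_mulVec_one, one_dotProduct_one] at this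
  simpa [minEig] using this

theorem one_le_minEig_grounded_lapMatrix_of_isUniversal (h : G.IsUniversal i) :
    1 ≤ minEig (grounded (G.lapMatrix ℝ) {i}) := by
  refine (G.isHermitian_grounded_lapMatrix {i}).le_sInf_spectrum_iff.mpr ?_
  have hdiag : (diagonal fun p : {v // v ∉ ({i} : Finset (Fin N))} =>
      if G.Adj p i then (1 : ℝ) else 0) = 1 := by
    rw [← diagonal_one]
    congr
    ext p
    exact if_pos (h (by simpa [eq_comm] using p.2)).symm
  rw [grounded_lapMatrix_singleton, hdiag, map_one, add_sub_cancel_right]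
  exact (G.comap _).posSemidef_lapMatrix ℝ

end Grounded

end SimpleGraph

theorem stmt10 {N : ℕ} (hN : 2 ≤ N) (G : SimpleGraph (Fin N)) [DecidableRel G.Adj]
    (i : Fin N) :
    minEig (grounded (G.lapMatrix ℝ) {i}) = 1 ↔ ∀ v : Fin N, v ≠ i → G.Adj i v := by
  have : Nontrivial (Fin N) := Fin.nontrivial_iff_two_le.mpr hN
  have hbound := G.minEig_grounded_lapMatrix_mul_le_degree i
  have hdegree_lt : G.degree i < N := by simpa using G.degree_lt_card_verts i
  have huniv : G.IsUniversal i ↔ G.degree i = N - 1 := by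
    simpa using (G.degree_eq_card_sub_one i).symm
  rw [show (∀ v, v ≠ i → G.Adj i v) ↔ G.IsUniversal i from
    ⟨fun h _ hv => h _ hv.symm, fun h _ hv => h hv.symm⟩, huniv]
  constructor
  · intro h
    rw [h, one_mul] at hbound
    have : N - 1 ≤ G.degree i := by exact_mod_cast hbound
    omega
  · intro h
    refine le_antisymm ?_ (G.one_le_minEig_grounded_lapMatrix_of_isUniversal i (huniv.mpr h))
    rw [h] at hbound
    exact (mul_le_iff_le_one_left (by norm_cast; omega)).mp hbound
end

section
/- Let S_N be the star graph on N > 2 vertices with center vertex 1. If a leaf vertex j (j ≥ 2) is deleted, the grounded Laplacian L(j|j) has smallest eigenvalue (N − √(N²−4))/2. -/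
/-!
Grounding a leaf of the star leaves a matrix of the same star shape: diagonal `N - 1` at the
centre and `1` at the `N - 2` remaining leaves, `-1` between centre and leaves. For an eigenvector
`y` with eigenvalue `μ ≠ 1` the leaf rows give `(1 - μ) y_a = y_c`, so `y` is constant on
the leaves, and the centre row becomes `(N - 1 - μ)(1 - μ) = N - 2`, i.e. `μ² - Nμ + 1 = 0`.
Hence the spectrum lies in `{1, (N ± √(N² - 4))/2}`, and the smaller root, which is below `1`,
is attained by `(1 - μ, 1, …, 1)`.
-/

open Matrix

/-- The star graph on `Fin N` with center `c`: `c` is adjacent to every other vertex and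
there are no other edges. -/
def starGraph (N : ℕ) (c : Fin N) : SimpleGraph (Fin N) where
  Adj v w := v ≠ w ∧ (v = c ∨ w = c)
  symm := ⟨fun v w h => ⟨h.1.symm, h.2.symm⟩⟩
  loopless := ⟨fun v h => h.1 rfl⟩

instance (N : ℕ) (c : Fin N) : DecidableRel (starGraph N c).Adj := fun v w =>
  inferInstanceAs (Decidable (v ≠ w ∧ (v = c ∨ w = c)))

open Finset Module End

theorem Matrix.mem_spectrum_iff_exists_mulVec_eq_smul {n K : Type*} [Fintype n] [DecidableEq n]
    [Field K] {A : Matrix n n K} {μ : K} :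
    μ ∈ spectrum K A ↔ ∃ v : n → K, v ≠ 0 ∧ A *ᵥ v = μ • v := by
  rw [← spectrum_toLin', ← hasEigenvalue_iff_mem_spectrum, hasEigenvalue_iff,
    Submodule.ne_bot_iff]
  simp only [mem_eigenspace_iff, toLin'_apply, and_comm]

theorem cast_card_univ_erase {ι R : Type*} [Fintype ι] [DecidableEq ι] [AddGroupWithOne R]
    (c : ι) : ((univ.erase c).card : R) = Fintype.card ι - 1 := by
  rw [card_erase_of_mem (mem_univ c), card_univ, Nat.cast_pred (Fintype.card_pos_iff.2 ⟨c⟩)]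

section StarMatrix

variable {ι K : Type*} [DecidableEq ι] [Field K]

/-- The Laplacian of a star centred at `c`, except that the centre's diagonal entry is a free
parameter `d`: grounding a leaf removes a neighbour of the centre but keeps its degree. -/
def starMatrix (c : ι) (d : K) : Matrix ι ι K :=
  Matrix.of fun a b => if a = b then (if a = c then d else 1) else if a = c ∨ b = c then -1 else 0

theorem starMatrix_submatrix {κ : Type*} [DecidableEq κ] {f : κ → ι}
    (hf : Function.Injective f) (c : κ) (d : K) :
    (starMatrix (f c) d).submatrix f f = starMatrix c d := by
  ext a b
  simp [starMatrix, hf.eq_iff]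

variable [Fintype ι] (c : ι) (d : K)

theorem mulVec_starMatrix_of_ne (x : ι → K) {a : ι} (ha : a ≠ c) :
    (starMatrix c d *ᵥ x) a = x a - x c := by
  simp [starMatrix, mulVec, dotProduct, ha, ha.symm, ite_mul, sum_ite, sub_eq_add_neg, filter_eq,
    filter_ne]

theorem mulVec_starMatrix_self (x : ι → K) :
    (starMatrix c d *ᵥ x) c = d * x c - ∑ a ∈ univ.erase c, x a := by
  simp [starMatrix, mulVec, dotProduct, ite_mul, sum_ite, sub_eq_add_neg, filter_eq, filter_ne]

variable {c d}

theorem eq_one_or_of_mem_spectrum_starMatrix {μ : K} (hμ : μ ∈ spectrum K (starMatrix c d)) :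
    μ = 1 ∨ (d - μ) * (1 - μ) = Fintype.card ι - 1 := by
  obtain ⟨y, hy0, hy⟩ := mem_spectrum_iff_exists_mulVec_eq_smul.1 hμ
  by_cases hμ1 : μ = 1
  · exact .inl hμ1
  right
  have hleaf : ∀ a ≠ c, (1 - μ) * y a = y c := fun a ha => by
    have h := congrFun hy a
    rw [mulVec_starMatrix_of_ne c d y ha, Pi.smul_apply, smul_eq_mul] at h
    linear_combination h
  have hyc : y c ≠ 0 := by
    intro h
    refine hy0 (funext fun a => ?_)
    by_cases ha : a = c
    · rw [ha, h, Pi.zero_apply]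
    · simpa [h, sub_ne_zero.2 (Ne.symm hμ1)] using hleaf a ha
  have hcenter := congrFun hy c
  rw [mulVec_starMatrix_self, Pi.smul_apply, smul_eq_mul] at hcenter
  have hsum : (1 - μ) * ∑ a ∈ univ.erase c, y a = (Fintype.card ι - 1) * y c := by
    rw [mul_sum, sum_congr rfl fun a ha => hleaf a (ne_of_mem_erase ha), sum_const,
      nsmul_eq_mul, cast_card_univ_erase]
  apply mul_right_cancel₀ hyc
  linear_combination (1 - μ) * hcenter + hsum

theorem mem_spectrum_starMatrix {μ : K} (hμ1 : μ ≠ 1)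
    (hμ : (d - μ) * (1 - μ) = Fintype.card ι - 1) : μ ∈ spectrum K (starMatrix c d) := by
  refine mem_spectrum_iff_exists_mulVec_eq_smul.2
    ⟨fun a => if a = c then 1 - μ else 1, fun h => ?_, funext fun a => ?_⟩
  · simpa [sub_eq_zero, Ne.symm hμ1] using congrFun h c
  by_cases ha : a = c
  · subst ha
    rw [mulVec_starMatrix_self, if_pos rfl,
      sum_congr rfl fun b hb => if_neg (ne_of_mem_erase hb), sum_const, nsmul_one,
      cast_card_univ_erase, Pi.smul_apply, if_pos rfl, smul_eq_mul]
    linear_combination hμ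
  · rw [mulVec_starMatrix_of_ne c d _ ha]
    simp [ha]

end StarMatrix

section StarGraph

variable {N : ℕ} (c : Fin N)

@[simp]
theorem starGraph_adj {v w : Fin N} : (starGraph N c).Adj v w ↔ v ≠ w ∧ (v = c ∨ w = c) :=
  Iff.rfl

theorem starGraph_degree_self : (starGraph N c).degree c = N - 1 := by
  have h : (starGraph N c).neighborFinset c = univ.erase c := by
    ext w
    simp [eq_comm]
  rw [SimpleGraph.degree, h, card_erase_of_mem (mem_univ c), card_univ, Fintype.card_fin]

theorem starGraph_degree_of_ne {v : Fin N} (hv : v ≠ c) : (starGraph N c).degree v = 1 := by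
  have h : (starGraph N c).neighborFinset v = {c} := by
    ext w
    simp only [SimpleGraph.mem_neighborFinset, starGraph_adj, mem_singleton, hv, false_or,
      and_iff_right_iff_imp]
    rintro rfl
    exact hv
  rw [SimpleGraph.degree, h, card_singleton]

theorem starGraph_lapMatrix (K : Type*) [Field K] :
    (starGraph N c).lapMatrix K = starMatrix c ((N : K) - 1) := by
  ext a b
  rw [SimpleGraph.lapMatrix, Matrix.sub_apply, SimpleGraph.degMatrix, diagonal_apply,
    SimpleGraph.adjMatrix_apply, starMatrix, of_apply]
  by_cases hab : a = b
  · subst hab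
    simp only [↓reduceIte, SimpleGraph.irrefl, sub_zero]
    split_ifs with ha
    · rw [ha, starGraph_degree_self, Nat.cast_pred c.pos]
    · rw [starGraph_degree_of_ne c ha, Nat.cast_one]
  · simp only [hab, ↓reduceIte, starGraph_adj, ne_eq, not_false_eq_true, true_and, zero_sub]
    rw [apply_ite Neg.neg, neg_zero]

end StarGraph

theorem sq_sub_mul_add_one_eq_zero_iff {t : ℝ} (ht : 2 ≤ t) (μ : ℝ) :
    μ ^ 2 - t * μ + 1 = 0 ↔
      μ = (t + √(t ^ 2 - 4)) / 2 ∨ μ = (t - √(t ^ 2 - 4)) / 2 := by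
  have hs : discrim 1 (-t) 1 = √(t ^ 2 - 4) * √(t ^ 2 - 4) := by
    rw [Real.mul_self_sqrt (by nlinarith), discrim]
    ring
  convert quadratic_eq_zero_iff one_ne_zero hs μ using 2 <;> ring_nf

theorem sub_sqrt_div_two_lt_one {t : ℝ} (ht : 2 < t) : (t - √(t ^ 2 - 4)) / 2 < 1 := by
  have : t - 2 < √(t ^ 2 - 4) := Real.lt_sqrt_of_sq_lt (by nlinarith)
  linarith

theorem stmt11 {N : ℕ} (hN : 2 < N) (c j : Fin N) (hj : j ≠ c) :
    minEig (grounded ((starGraph N c).lapMatrix ℝ) {j}) =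
      ((N : ℝ) - Real.sqrt ((N : ℝ) ^ 2 - 4)) / 2 := by
  have hN' : (2 : ℝ) < N := by exact_mod_cast hN
  let c' : {v : Fin N // v ∉ ({j} : Finset (Fin N))} := ⟨c, by simpa using hj.symm⟩
  have hgrounded :
      grounded ((starGraph N c).lapMatrix ℝ) {j} = starMatrix c' ((N : ℝ) - 1) := by
    rw [starGraph_lapMatrix]
    exact starMatrix_submatrix Subtype.val_injective c' _
  have hcard : (Fintype.card {v : Fin N // v ∉ ({j} : Finset (Fin N))} : ℝ) = N - 1 := by
    simp [Fintype.card_subtype_compl, Nat.cast_pred c.pos]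
  rw [minEig, hgrounded]
  refine IsLeast.csInf_eq ⟨?_, fun μ hμ => ?_⟩
  · refine mem_spectrum_starMatrix (sub_sqrt_div_two_lt_one hN').ne ?_
    rw [hcard]
    linear_combination (sq_sub_mul_add_one_eq_zero_iff hN'.le _).2 (.inr rfl)
  · rcases eq_one_or_of_mem_spectrum_starMatrix hμ with rfl | h
    · exact (sub_sqrt_div_two_lt_one hN').le
    rw [hcard] at h
    rcases (sq_sub_mul_add_one_eq_zero_iff hN'.le μ).1 (by linear_combination h) with rfl | rfl
    · linarith [Real.sqrt_nonneg ((N : ℝ) ^ 2 - 4)]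
    · exact le_rfl
end

section
/- Let A and B be real symmetric N×N matrices with eigenvalues ordered increasingly λ_1 ≤ ... ≤ λ_N. Then for each i and each 1 ≤ j ≤ i, λ_{i−j+1}(A) + λ_j(B) ≤ λ_i(A+B). -/
/-!
Pick a unit vector `x` in the span of the eigenvectors of `A` with sorted index `≥ i - j`, of
those of `B` with index `≥ j`, and of those of `A + B` with index `≤ i`. These spaces have
dimensions `N - (i - j)`, `N - j` and `i + 1`, summing to more than `2N`, so they meet
nontrivially. Expanding the quadratic forms in the respective eigenbases then gives
`λ_{i-j}(A) + λ_j(B) ≤ ⟪A x, x⟫ + ⟪B x, x⟫ = ⟪(A + B) x, x⟫ ≤ λ_i(A + B)`.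
-/

open Matrix

/-- `μ` is a monotone enumeration (with multiplicity) of the eigenvalues of the
Hermitian matrix `M`. -/
def SortedEigs {N : ℕ} {M : Matrix (Fin N) (Fin N) ℝ} (hM : M.IsHermitian)
    (μ : Fin N → ℝ) : Prop :=
  Monotone μ ∧ ∃ σ : Equiv.Perm (Fin N), μ = hM.eigenvalues ∘ σ

open Finset Module
open scoped RealInnerProductSpace

section Eigenbasis

variable {ι E : Type*} [Fintype ι] [NormedAddCommGroup E] [InnerProductSpace ℝ E]
  {T : E →ₗ[ℝ] E} {e : OrthonormalBasis ι ℝ E} {μ : ι → ℝ}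

theorem OrthonormalBasis.inner_map_self_eq_sum (hT : ∀ k, T (e k) = μ k • e k) (x : E) :
    ⟪T x, x⟫ = ∑ k, μ k * e.repr x k ^ 2 := by
  have hTx : T x = ∑ k, (μ k * e.repr x k) • e k := by
    conv_lhs => rw [← e.sum_repr x]
    simp only [map_sum, map_smul, hT, smul_smul, mul_comm]
  rw [hTx, sum_inner]
  refine sum_congr rfl fun k _ => ?_
  rw [real_inner_smul_left, ← e.repr_apply_apply]
  ring

theorem OrthonormalBasis.norm_sq_eq_sum (x : E) : ‖x‖ ^ 2 = ∑ k, e.repr x k ^ 2 := by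
  simpa using e.inner_map_self_eq_sum (T := LinearMap.id) (μ := 1) (fun _ => by simp) x

theorem OrthonormalBasis.repr_eq_zero_of_mem_span {s : Set ι} {x : E}
    (hx : x ∈ Submodule.span ℝ (e '' s)) {k : ι} (hk : k ∉ s) : e.repr x k = 0 := by
  rw [← e.coe_toBasis, Basis.mem_span_image] at hx
  rw [← e.coe_toBasis_repr_apply]
  exact Finsupp.notMem_support_iff.1 fun h => hk (hx h)

theorem OrthonormalBasis.finrank_span_image (s : Finset ι) :
    finrank ℝ (Submodule.span ℝ (e '' s)) = s.card := by
  classical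
  rw [← coe_image, finrank_span_finset_eq_card,
    card_image_of_injective _ e.orthonormal.linearIndependent.injective]
  simpa using (e.orthonormal.linearIndependent.linearIndepOn (s := s)).id_image

theorem OrthonormalBasis.mul_norm_sq_le_inner_map_self (hT : ∀ k, T (e k) = μ k • e k)
    {s : Set ι} {x : E} (hx : x ∈ Submodule.span ℝ (e '' s)) {r : ℝ}
    (hr : ∀ k ∈ s, r ≤ μ k) : r * ‖x‖ ^ 2 ≤ ⟪T x, x⟫ := by
  rw [e.inner_map_self_eq_sum hT, e.norm_sq_eq_sum, mul_sum]
  refine sum_le_sum fun k _ => ?_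
  by_cases hk : k ∈ s
  · exact mul_le_mul_of_nonneg_right (hr k hk) (sq_nonneg _)
  · simp [e.repr_eq_zero_of_mem_span hx hk]

theorem OrthonormalBasis.inner_map_self_le_mul_norm_sq (hT : ∀ k, T (e k) = μ k • e k)
    {s : Set ι} {x : E} (hx : x ∈ Submodule.span ℝ (e '' s)) {r : ℝ}
    (hr : ∀ k ∈ s, μ k ≤ r) : ⟪T x, x⟫ ≤ r * ‖x‖ ^ 2 := by
  have hnegT : ∀ k, (-T) (e k) = (-μ k) • e k := fun k => by simp [hT]
  have := e.mul_norm_sq_le_inner_map_self hnegT hx (r := -r) fun k hk => neg_le_neg (hr k hk)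
  simp only [LinearMap.neg_apply, inner_neg_left] at this
  linarith

end Eigenbasis

theorem Submodule.exists_ne_zero_mem_inf_inf {K V : Type*} [DivisionRing K] [AddCommGroup V]
    [Module K V] [FiniteDimensional K V] (U W X : Submodule K V)
    (h : 2 * finrank K V < finrank K U + finrank K W + finrank K X) :
    ∃ x ∈ U ⊓ W ⊓ X, x ≠ 0 := by
  refine Submodule.exists_mem_ne_zero_of_ne_bot fun hbot => ?_
  have hUW := Submodule.finrank_sup_add_finrank_inf_eq U W
  have hUWX := Submodule.finrank_sup_add_finrank_inf_eq (U ⊓ W) X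
  have := Submodule.finrank_le (U ⊔ W)
  have := Submodule.finrank_le (U ⊓ W ⊔ X)
  rw [hbot, finrank_bot] at hUWX
  omega

theorem weyl_lower_of_orthonormalBasis {N : ℕ} {E : Type*} [NormedAddCommGroup E]
    [InnerProductSpace ℝ E] {S T : E →ₗ[ℝ] E} {eS eT eST : OrthonormalBasis (Fin N) ℝ E}
    {a b c : Fin N → ℝ} (ha : Monotone a) (hb : Monotone b) (hc : Monotone c)
    (hS : ∀ k, S (eS k) = a k • eS k) (hT : ∀ k, T (eT k) = b k • eT k)
    (hST : ∀ k, (S + T) (eST k) = c k • eST k) {k j i : Fin N} (hkji : (k : ℕ) + j ≤ i) :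
    a k + b j ≤ c i := by
  have : FiniteDimensional ℝ E := eS.toBasis.finiteDimensional_of_finite
  have hN : finrank ℝ E = N := by simp [finrank_eq_card_basis eS.toBasis]
  obtain ⟨x, ⟨⟨hxS, hxT⟩, hxST⟩, hx0⟩ := Submodule.exists_ne_zero_mem_inf_inf
    (Submodule.span ℝ (eS '' ↑(Ici k))) (Submodule.span ℝ (eT '' ↑(Ici j)))
    (Submodule.span ℝ (eST '' ↑(Iic i))) (by
      simp only [OrthonormalBasis.finrank_span_image, Fin.card_Ici, Fin.card_Iic, hN]
      omega)
  have hSx := eS.mul_norm_sq_le_inner_map_self hS hxS fun l hl => ha (mem_Ici.1 hl)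
  have hTx := eT.mul_norm_sq_le_inner_map_self hT hxT fun l hl => hb (mem_Ici.1 hl)
  have hSTx := eST.inner_map_self_le_mul_norm_sq hST hxST fun l hl => hc (mem_Iic.1 hl)
  rw [LinearMap.add_apply, inner_add_left] at hSTx
  have hx : 0 < ‖x‖ ^ 2 := by positivity
  exact le_of_mul_le_mul_right (by linarith : (a k + b j) * ‖x‖ ^ 2 ≤ c i * ‖x‖ ^ 2) hx

theorem SortedEigs.exists_orthonormalBasis {N : ℕ} {M : Matrix (Fin N) (Fin N) ℝ}
    {hM : M.IsHermitian} {μ : Fin N → ℝ} (h : SortedEigs hM μ) :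
    ∃ e : OrthonormalBasis (Fin N) ℝ (EuclideanSpace ℝ (Fin N)),
      ∀ k, toEuclideanLin M (e k) = μ k • e k := by
  obtain ⟨-, σ, rfl⟩ := h
  refine ⟨hM.eigenvectorBasis.reindex σ.symm, fun k => ?_⟩
  simp [toLpLin_apply, hM.mulVec_eigenvectorBasis]

/-- Eigenvalues are indexed from `0`, so the informal `λ_{i-j+1}` is `a ⟨i - j, _⟩` here. -/
theorem stmt14 {N : ℕ} (A B : Matrix (Fin N) (Fin N) ℝ)
    (hA : A.IsHermitian) (hB : B.IsHermitian) (hAB : (A + B).IsHermitian)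
    (a b c : Fin N → ℝ)
    (ha : SortedEigs hA a) (hb : SortedEigs hB b) (hc : SortedEigs hAB c)
    (i j : ℕ) (hji : j ≤ i) (hi : i < N) :
    a ⟨i - j, by omega⟩ + b ⟨j, by omega⟩ ≤ c ⟨i, hi⟩ := by
  obtain ⟨eA, heA⟩ := ha.exists_orthonormalBasis
  obtain ⟨eB, heB⟩ := hb.exists_orthonormalBasis
  obtain ⟨eAB, heAB⟩ := hc.exists_orthonormalBasis
  rw [map_add] at heAB
  exact weyl_lower_of_orthonormalBasis ha.1 hb.1 hc.1 heA heB heAB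
    (Nat.sub_add_cancel hji).le
end

section
/- Let U be a real n×m matrix with U^T U = I_m and A a real symmetric n×n matrix with eigenvalues λ_1 ≤ ... ≤ λ_n (increasing order). Let B = U^T A U with eigenvalues μ_1 ≤ ... ≤ μ_m. Then for each i = 1,...,m, λ_i ≤ μ_i ≤ λ_{n−m+i}. -/
/-!
Courant–Fischer argument, with eigenvalues indexed from `0`. The eigenvectors of `A` belonging to
`λ_i, …, λ_{n-1}` span an `(n - i)`-dimensional subspace on which `⟪x, A x⟫ ≥ λ_i ‖x‖²`. The
eigenvectors of `B = Uᵀ A U` belonging to `μ_0, …, μ_i` span an `(i + 1)`-dimensional subspace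
on which `⟪y, B y⟫ ≤ μ_i ‖y‖²`; since `U` is an isometry with `⟪U y, A (U y)⟫ = ⟪y, B y⟫`, its
image is an `(i + 1)`-dimensional subspace of `ℝⁿ` on which `⟪x, A x⟫ ≤ μ_i ‖x‖²`. The two
subspaces of `ℝⁿ` meet nontrivially, so `λ_i ≤ μ_i`. The upper bound `μ_i ≤ λ_{n-m+i}` is the
same argument with the inequalities reversed, i.e. applied to the form `-⟪x, A x⟫`.
-/

open Matrix

open Module Submodule
open scoped RealInnerProductSpace

theorem Submodule.exists_mem_inf_ne_zero_of_finrank_lt {K V : Type*} [DivisionRing K]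
    [AddCommGroup V] [Module K V] [FiniteDimensional K V] {P Q : Submodule K V}
    (h : finrank K V < finrank K P + finrank K Q) : ∃ x ∈ P ⊓ Q, x ≠ 0 := by
  refine exists_mem_ne_zero_of_ne_bot fun hbot => ?_
  have := finrank_sup_add_finrank_inf_eq P Q
  rw [hbot, finrank_bot] at this
  have := (P ⊔ Q).finrank_le
  omega

theorem LinearIndependent.finrank_span_image_finset {K V ι : Type*} [DivisionRing K]
    [AddCommGroup V] [Module K V] {b : ι → V} (hb : LinearIndependent K b) (t : Finset ι) :
    finrank K (span K (b '' t)) = t.card := by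
  rw [Set.image_eq_range]
  exact (finrank_span_eq_card (hb.comp _ Subtype.val_injective)).trans (by simp)

namespace OrthonormalBasis

variable {ι E : Type*} [Fintype ι] [NormedAddCommGroup E] [InnerProductSpace ℝ E]
  (b : OrthonormalBasis ι ℝ E) {T : E →ₗ[ℝ] E} {eig : ι → ℝ}

theorem inner_map_self_eq_sum_s19 (hT : ∀ j, T (b j) = eig j • b j) (x : E) :
    ⟪x, T x⟫ = ∑ j, eig j * ⟪b j, x⟫ ^ 2 := by
  have hTx : T x = ∑ j, (eig j * ⟪b j, x⟫) • b j := by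
    conv_lhs => rw [← b.sum_repr' x]
    simp only [map_sum, map_smul, hT, smul_smul, mul_comm]
  rw [hTx, inner_sum]
  refine Finset.sum_congr rfl fun j _ => ?_
  rw [inner_smul_right, real_inner_comm]
  ring

theorem inner_eq_zero_of_mem_span_image {s : Set ι} {x : E} (hx : x ∈ span ℝ (b '' s)) {j : ι}
    (hj : j ∉ s) : ⟪b j, x⟫ = 0 := by
  obtain ⟨l, hl, rfl⟩ := (Finsupp.mem_span_image_iff_linearCombination ℝ).1 hx
  rw [real_inner_comm]
  exact b.orthonormal.inner_finsupp_eq_zero hj hl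

theorem mul_norm_sq_le_inner_map_self_s19 (hT : ∀ j, T (b j) = eig j • b j) {s : Set ι} {c : ℝ}
    (hc : ∀ j ∈ s, c ≤ eig j) {x : E} (hx : x ∈ span ℝ (b '' s)) :
    c * ‖x‖ ^ 2 ≤ ⟪x, T x⟫ := by
  rw [← b.sum_sq_inner_right, b.inner_map_self_eq_sum_s19 hT, Finset.mul_sum]
  refine Finset.sum_le_sum fun j _ => ?_
  by_cases hj : j ∈ s
  · exact mul_le_mul_of_nonneg_right (hc j hj) (sq_nonneg _)
  · simp [b.inner_eq_zero_of_mem_span_image hx hj]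

theorem inner_map_self_le_mul_norm_sq_s19 (hT : ∀ j, T (b j) = eig j • b j) {s : Set ι} {c : ℝ}
    (hc : ∀ j ∈ s, eig j ≤ c) {x : E} (hx : x ∈ span ℝ (b '' s)) :
    ⟪x, T x⟫ ≤ c * ‖x‖ ^ 2 := by
  have := b.mul_norm_sq_le_inner_map_self_s19 (T := -T) (eig := -eig) (c := -c) (by simp [hT])
    (by simpa using hc) hx
  simpa [inner_neg_right] using this

end OrthonormalBasis

theorem LinearIsometry.le_of_finrank_lt_of_bounds {E F : Type*} [NormedAddCommGroup E]
    [NormedSpace ℝ E] [NormedAddCommGroup F] [NormedSpace ℝ F] [FiniteDimensional ℝ F]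
    (U : E →ₗᵢ[ℝ] F) (V : Submodule ℝ F) (W : Submodule ℝ E)
    (h : finrank ℝ F < finrank ℝ V + finrank ℝ W) {q : F → ℝ} {c d : ℝ}
    (hV : ∀ x ∈ V, c * ‖x‖ ^ 2 ≤ q x) (hW : ∀ y ∈ W, q (U y) ≤ d * ‖y‖ ^ 2) : c ≤ d := by
  have hUW : finrank ℝ (W.map U.toLinearMap) = finrank ℝ W :=
    (W.equivMapOfInjective _ U.injective).finrank_eq.symm
  obtain ⟨x, ⟨hxV, y, hyW, rfl⟩, hx⟩ := exists_mem_inf_ne_zero_of_finrank_lt (hUW ▸ h)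
  have hy : 0 < ‖y‖ ^ 2 := by
    have : y ≠ 0 := by rintro rfl; simp at hx
    positivity
  have := (hV _ hxV).trans (hW y hyW)
  rw [LinearIsometry.coe_toLinearMap, U.norm_map] at this
  exact le_of_mul_le_mul_right this hy

namespace Matrix

variable {m n : Type*} [Fintype m] [DecidableEq m] [Fintype n] [DecidableEq n]

theorem inner_toEuclideanLin_left (U : Matrix n m ℝ) (y : EuclideanSpace ℝ m)
    (x : EuclideanSpace ℝ n) : ⟪toEuclideanLin U y, x⟫ = ⟪y, toEuclideanLin Uᵀ x⟫ := by
  rw [← conjTranspose_eq_transpose_of_trivial, toEuclideanLin_conjTranspose_eq_adjoint,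
    LinearMap.adjoint_inner_right]

theorem inner_toEuclideanLin_compression (U : Matrix n m ℝ) (A : Matrix n n ℝ)
    (y : EuclideanSpace ℝ m) :
    ⟪toEuclideanLin U y, toEuclideanLin A (toEuclideanLin U y)⟫
      = ⟪y, toEuclideanLin (Uᵀ * A * U) y⟫ := by
  rw [inner_toEuclideanLin_left]
  simp [toEuclideanLin]

noncomputable def toEuclideanIsometry (U : Matrix n m ℝ) (hU : Uᵀ * U = 1) :
    EuclideanSpace ℝ m →ₗᵢ[ℝ] EuclideanSpace ℝ n :=
  (toEuclideanLin U).isometryOfInner fun x y => by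
    rw [inner_toEuclideanLin_left, ← LinearMap.comp_apply]
    simp [toEuclideanLin, ← toLpLin_mul, hU]

theorem IsHermitian.toEuclideanLin_eigenvectorBasis {M : Matrix n n ℝ} (hM : M.IsHermitian)
    (j : n) :
    toEuclideanLin M (hM.eigenvectorBasis j) = hM.eigenvalues j • hM.eigenvectorBasis j := by
  ext1
  simp [hM.mulVec_eigenvectorBasis j]

end Matrix

namespace SortedEigs

variable {N : ℕ} {M : Matrix (Fin N) (Fin N) ℝ} {hM : M.IsHermitian} {μ : Fin N → ℝ}

theorem exists_submodule_le_inner (hμ : SortedEigs hM μ) (k : Fin N) :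
    ∃ V : Submodule ℝ (EuclideanSpace ℝ (Fin N)), finrank ℝ V = N - k ∧
      ∀ x ∈ V, μ k * ‖x‖ ^ 2 ≤ ⟪x, toEuclideanLin M x⟫ := by
  obtain ⟨hmono, σ, rfl⟩ := hμ
  let t := (Finset.Ici k).map σ.toEmbedding
  refine ⟨span ℝ (hM.eigenvectorBasis '' t), ?_, fun x hx => ?_⟩
  · rw [hM.eigenvectorBasis.orthonormal.linearIndependent.finrank_span_image_finset,
      Finset.card_map, Fin.card_Ici]
  · refine hM.eigenvectorBasis.mul_norm_sq_le_inner_map_self_s19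
      hM.toEuclideanLin_eigenvectorBasis ?_ hx
    simpa [t] using fun j hj => by simpa using hmono hj

theorem exists_submodule_inner_le (hμ : SortedEigs hM μ) (k : Fin N) :
    ∃ V : Submodule ℝ (EuclideanSpace ℝ (Fin N)), finrank ℝ V = k + 1 ∧
      ∀ x ∈ V, ⟪x, toEuclideanLin M x⟫ ≤ μ k * ‖x‖ ^ 2 := by
  obtain ⟨hmono, σ, rfl⟩ := hμ
  let t := (Finset.Iic k).map σ.toEmbedding
  refine ⟨span ℝ (hM.eigenvectorBasis '' t), ?_, fun x hx => ?_⟩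
  · rw [hM.eigenvectorBasis.orthonormal.linearIndependent.finrank_span_image_finset,
      Finset.card_map, Fin.card_Iic]
  · refine hM.eigenvectorBasis.inner_map_self_le_mul_norm_sq_s19
      hM.toEuclideanLin_eigenvectorBasis ?_ hx
    simpa [t] using fun j hj => by simpa using hmono hj

end SortedEigs

/-- Cauchy interlacing (Poincaré separation) theorem: with eigenvalues indexed in
nondecreasing order starting from `0`, `λ_i ≤ μ_i ≤ λ_{n-m+i}`. -/
theorem stmt19 {n m : ℕ} (hmn : m ≤ n)
    (U : Matrix (Fin n) (Fin m) ℝ) (hU : Uᵀ * U = 1)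
    (A : Matrix (Fin n) (Fin n) ℝ) (hA : A.IsHermitian)
    (hB : (Uᵀ * A * U).IsHermitian)
    (lam : Fin n → ℝ) (mu : Fin m → ℝ)
    (hlam : SortedEigs hA lam) (hmu : SortedEigs hB mu)
    (i : Fin m) :
    lam ⟨i.1, by omega⟩ ≤ mu i ∧ mu i ≤ lam ⟨n - m + i.1, by omega⟩ := by
  let Ū := toEuclideanIsometry U hU
  have hq (y) : ⟪Ū y, toEuclideanLin A (Ū y)⟫ = ⟪y, toEuclideanLin (Uᵀ * A * U) y⟫ :=
    inner_toEuclideanLin_compression U A y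
  obtain ⟨V₁, hV₁, hAV₁⟩ := hlam.exists_submodule_le_inner ⟨i, by omega⟩
  obtain ⟨W₁, hW₁, hBW₁⟩ := hmu.exists_submodule_inner_le i
  obtain ⟨V₂, hV₂, hAV₂⟩ := hlam.exists_submodule_inner_le ⟨n - m + i, by omega⟩
  obtain ⟨W₂, hW₂, hBW₂⟩ := hmu.exists_submodule_le_inner i
  constructor
  · refine Ū.le_of_finrank_lt_of_bounds V₁ W₁ ?_ hAV₁ fun y hy => (hq y).trans_le (hBW₁ y hy)
    simp only [finrank_euclideanSpace_fin, hV₁, hW₁]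
    omega
  · refine neg_le_neg_iff.1 <| Ū.le_of_finrank_lt_of_bounds V₂ W₂
      (q := fun x => -⟪x, toEuclideanLin A x⟫) ?_
      (fun x hx => by rw [neg_mul, neg_le_neg_iff]; exact hAV₂ x hx)
      fun y hy => by rw [hq, neg_mul, neg_le_neg_iff]; exact hBW₂ y hy
    simp only [finrank_euclideanSpace_fin, hV₂, hW₂]
    omega
end
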